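/- arXiv:1109.0459 — 7 statements merged into one kernel-verified Lean document; each statement's English description precedes it below -/
import Mathlib

section
/- Detailed balance of the two-level CGMC kernel (Theorem 3.1(i)): for all σ, σ' ∈ Σ with σ ≠ σ', one has K_CG(σ,σ') μ(σ) = K_CG(σ',σ) μ(σ'). -/
/-!
Both levels are Metropolis–Hastings steps. For a target `π` and proposal `q` the flux
`π x q(x,y) min{1, π y q(y,x) / (π x q(x,y))}` equals `min{π x q(x,y), π y q(y,x)}`, which is
symmetric in `x, y`. The fine acceptance is of this form for the target `μ` and the proposal
weight `μ̄⁰(Tσ') μ_r(σ'|Tσ')`, the coarse one for `μ̄⁰` and `ρ̄`; multiplying `K_CG(σ,σ') μ(σ)` by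
`μ̄⁰(Tσ) μ̄⁰(Tσ')` turns it into the product of a fine and a coarse flux.
-/

open Finset

theorem mul_min_one_div_eq_min {a b : ℝ} (ha : 0 ≤ a) (hb : 0 ≤ b) :
    a * min 1 (b / a) = min a b := by
  rcases ha.eq_or_lt with rfl | ha
  · simp [hb]
  · rw [mul_min_of_nonneg _ _ ha.le, mul_one, mul_div_cancel₀ _ ha.ne']

section MetropolisHastings

variable {β : Type*} (π : β → ℝ) (q : β → β → ℝ)

noncomputable def mhAcceptance (x y : β) : ℝ := min 1 (π y * q y x / (π x * q x y))

theorem mul_mhAcceptance_eq_min {x y : β} (hxy : 0 ≤ π x * q x y) (hyx : 0 ≤ π y * q y x) :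
    π x * q x y * mhAcceptance π q x y = min (π x * q x y) (π y * q y x) :=
  mul_min_one_div_eq_min hxy hyx

theorem mul_mhAcceptance_comm {x y : β} (hxy : 0 ≤ π x * q x y) (hyx : 0 ≤ π y * q y x) :
    π x * q x y * mhAcceptance π q x y = π y * q y x * mhAcceptance π q y x := by
  rw [mul_mhAcceptance_eq_min π q hxy hyx, mul_mhAcceptance_eq_min π q hyx hxy, min_comm]

end MetropolisHastings

theorem mul_acceptance_eq_mul_mhAcceptance {β : Type*} {π : β → ℝ} {q : β → β → ℝ}
    {α : β → β → ℝ} (hα : ∀ x y, 0 < q x y → α x y = mhAcceptance π q x y)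
    (hq : ∀ x y, 0 ≤ q x y) (x y : β) :
    π x * q x y * α x y = π x * q x y * mhAcceptance π q x y := by
  rcases (hq x y).eq_or_lt with h | h
  · simp [← h]
  · rw [hα x y h]

theorem two_level_CGMC_detailed_balance_general
    {S Sb : Type*}
    (T : S → Sb) (μ : S → ℝ) (μ0b : Sb → ℝ)
    (ρb : Sb → Sb → ℝ) (μr : S → Sb → ℝ)
    (hμpos : ∀ σ, 0 < μ σ)
    (hμ0bpos : ∀ η, 0 < μ0b η)
    (hρbnn : ∀ η η', 0 ≤ ρb η η')
    (hμrnn : ∀ σ η, 0 ≤ μr σ η)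
    (αCG : Sb → Sb → ℝ)
    (hαCG : ∀ η η', 0 < ρb η η' →
      αCG η η' = min 1 ((μ0b η' * ρb η' η) / (μ0b η * ρb η η')))
    (αf : S → S → ℝ)
    (hαf : ∀ σ σ', αf σ σ' =
      min 1 ((μ σ' * μ0b (T σ) * μr σ (T σ)) /
             (μ σ * μ0b (T σ') * μr σ' (T σ'))))
    (KCG : S → S → ℝ)
    (hKCGoff : ∀ σ σ', σ ≠ σ' →
      KCG σ σ' = αf σ σ' * αCG (T σ) (T σ') * μr σ' (T σ') * ρb (T σ) (T σ')) :
    ∀ σ σ', σ ≠ σ' → KCG σ σ' * μ σ = KCG σ' σ * μ σ' := by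
  intro σ σ' hne
  set qf : S → S → ℝ := fun σ σ' => μ0b (T σ') * μr σ' (T σ')
  have hqf : ∀ σ σ', 0 ≤ μ σ * qf σ σ' := fun σ σ' =>
    mul_nonneg (hμpos σ).le (mul_nonneg (hμ0bpos _).le (hμrnn _ _))
  have hαf_mh : ∀ σ σ', αf σ σ' = mhAcceptance μ qf σ σ' := by
    intro σ σ'
    simp only [hαf, mhAcceptance, qf, mul_assoc]
  have hcoarse_nn : ∀ η η', 0 ≤ μ0b η * ρb η η' := fun η η' =>
    mul_nonneg (hμ0bpos η).le (hρbnn η η')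
  have hcoarse := mul_acceptance_eq_mul_mhAcceptance (π := μ0b) (α := αCG) hαCG hρbnn
  have hfine_symm := mul_mhAcceptance_comm μ qf (hqf σ σ') (hqf σ' σ)
  have hcoarse_symm := mul_mhAcceptance_comm μ0b ρb (hcoarse_nn (T σ) (T σ'))
    (hcoarse_nn (T σ') (T σ))
  have hμ0b_ne : μ0b (T σ) * μ0b (T σ') ≠ 0 := (mul_pos (hμ0bpos _) (hμ0bpos _)).ne'
  apply mul_right_cancel₀ hμ0b_ne
  calc KCG σ σ' * μ σ * (μ0b (T σ) * μ0b (T σ'))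
      = μ σ * qf σ σ' * mhAcceptance μ qf σ σ' *
          (μ0b (T σ) * ρb (T σ) (T σ') * αCG (T σ) (T σ')) := by
        rw [hKCGoff σ σ' hne, hαf_mh]; ring
    _ = μ σ' * qf σ' σ * mhAcceptance μ qf σ' σ *
          (μ0b (T σ') * ρb (T σ') (T σ) * αCG (T σ') (T σ)) := by
        rw [hcoarse, hcoarse, hfine_symm, hcoarse_symm]
    _ = KCG σ' σ * μ σ' * (μ0b (T σ) * μ0b (T σ')) := by
        rw [hKCGoff σ' σ hne.symm, hαf_mh]; ring

/-- Detailed balance of the two-level CGMC kernel (Theorem 3.1(i)). -/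
theorem two_level_CGMC_detailed_balance
    {S Sb : Type*} [Fintype S] [Fintype Sb] [Nonempty S] [Nonempty Sb]
    [DecidableEq S] [DecidableEq Sb]
    (T : S → Sb) (μ : S → ℝ) (μ0b : Sb → ℝ)
    (ρb : Sb → Sb → ℝ) (μr : S → Sb → ℝ)
    (hμpos : ∀ σ, 0 < μ σ) (hμsum : ∑ σ, μ σ = 1)
    (hμ0bpos : ∀ η, 0 < μ0b η)
    (hρbnn : ∀ η η', 0 ≤ ρb η η') (hρbsum : ∀ η, ∑ η', ρb η η' = 1)
    (hμrnn : ∀ σ η, 0 ≤ μr σ η)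
    (hμr0 : ∀ σ η, T σ ≠ η → μr σ η = 0)
    (hμrsum : ∀ η, (∃ σ, T σ = η) →
      ∑ σ ∈ univ.filter (fun σ => T σ = η), μr σ η = 1)
    (hμrpos : ∀ σ, 0 < μr σ (T σ))
    (αCG : Sb → Sb → ℝ)
    (hαCG : ∀ η η', 0 < ρb η η' →
      αCG η η' = min 1 ((μ0b η' * ρb η' η) / (μ0b η * ρb η η')))
    (hαCG1 : ∀ η η', ¬ 0 < ρb η η' → αCG η η' = 1)
    (αf : S → S → ℝ)
    (hαf : ∀ σ σ', αf σ σ' =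
      min 1 ((μ σ' * μ0b (T σ) * μr σ (T σ)) /
             (μ σ * μ0b (T σ') * μr σ' (T σ'))))
    (KCG : S → S → ℝ)
    (hKCGoff : ∀ σ σ', σ ≠ σ' →
      KCG σ σ' = αf σ σ' * αCG (T σ) (T σ') * μr σ' (T σ') * ρb (T σ) (T σ'))
    (hKCGdiag : ∀ σ, KCG σ σ =
      1 - ∑ σ' ∈ univ.filter (fun σ' => σ' ≠ σ), KCG σ σ') :
    ∀ σ σ', σ ≠ σ' → KCG σ σ' * μ σ = KCG σ' σ * μ σ' :=
  two_level_CGMC_detailed_balance_general T μ μ0b ρb μr hμpos hμ0bpos hρbnn hμrnn αCG hαCG αf hαf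
    KCG hKCGoff
end

section
/- Stationarity of the target measure under the two-level CGMC kernel (Theorem 3.1(ii)): for every σ' ∈ Σ, ∑_{σ ∈ Σ} μ(σ) K_CG(σ,σ') = μ(σ'). -/
/-!
Off the diagonal, the two-level kernel is a Metropolis–Hastings kernel for `μ` whose proposal is
"move the coarse chain one accepted step, then reconstruct". The coarse step is reversible for
`μ̄⁰`, so the proposal is reversible for `ν σ = μ̄⁰(Tσ) μ_r(σ|Tσ)`, and `α_f` is exactly the
Metropolis correction from `ν` to `μ`. Hence `K_CG` satisfies detailed balance for `μ`, and since
the diagonal carries the rejected mass, detailed balance gives stationarity.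
-/

open Finset

theorem sum_mul_eq_of_detailed_balance {α : Type*} [Fintype α] [DecidableEq α]
    (μ : α → ℝ) (K : α → α → ℝ)
    (hdiag : ∀ x, K x x = 1 - ∑ y ∈ univ.filter (fun y => y ≠ x), K x y)
    (hdb : ∀ x y, x ≠ y → μ x * K x y = μ y * K y x) (y : α) :
    ∑ x, μ x * K x y = μ y := by
  have hoff : ∑ x ∈ univ.erase y, μ x * K x y = μ y * ∑ x ∈ univ.erase y, K y x := by
    rw [mul_sum]
    exact sum_congr rfl fun x hx => hdb x y (ne_of_mem_erase hx)
  rw [← add_sum_erase _ _ (mem_univ y), hoff, hdiag, filter_ne' univ y]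
  ring

theorem mul_min_one_div_of_pos {a : ℝ} (b : ℝ) (ha : 0 < a) : a * min 1 (b / a) = min a b := by
  rw [mul_min_of_nonneg _ _ ha.le, mul_one, mul_div_cancel₀ _ ha.ne']

theorem mul_acceptance_mul_proposal {πx πy qxy qyx a : ℝ} (hπx : 0 < πx) (hqxy : 0 ≤ qxy)
    (hflux : 0 ≤ πy * qyx) (ha : 0 < qxy → a = min 1 (πy * qyx / (πx * qxy))) :
    πx * (a * qxy) = min (πx * qxy) (πy * qyx) := by
  by_cases hq : 0 < qxy
  · rw [ha hq, ← mul_min_one_div_of_pos _ (mul_pos hπx hq)]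
    ring
  · have hq0 : qxy = 0 := le_antisymm (not_lt.mp hq) hqxy
    rw [hq0, mul_zero, mul_zero, min_eq_left hflux]

theorem mul_min_one_div_eq_mul_min_div {πx πy νx νy : ℝ} (hπx : 0 < πx) (hνx : 0 < νx)
    (hνy : 0 < νy) :
    πx * min 1 (πy * νx / (πx * νy)) = νx * min (πx / νx) (πy / νy) := by
  rw [mul_min_of_nonneg _ _ hπx.le, mul_min_of_nonneg _ _ hνx.le]
  congr 1 <;> field_simp

theorem metropolis_detailed_balance {πx πy νx νy Pxy Pyx : ℝ} (hπx : 0 < πx) (hπy : 0 < πy)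
    (hνx : 0 < νx) (hνy : 0 < νy) (hP : νx * Pxy = νy * Pyx) :
    πx * (min 1 (πy * νx / (πx * νy)) * Pxy) = πy * (min 1 (πx * νy / (πy * νx)) * Pyx) := by
  rw [← mul_assoc, mul_min_one_div_eq_mul_min_div hπx hνx hνy, ← mul_assoc,
    mul_min_one_div_eq_mul_min_div hπy hνy hνx, min_comm (πy / νy)]
  linear_combination min (πx / νx) (πy / νy) * hP

theorem reversible_lift {S Sb : Type*} (T : S → Sb) (π : Sb → ℝ) (Q : Sb → Sb → ℝ) (r : S → ℝ)
    (hQ : ∀ η η', π η * Q η η' = π η' * Q η' η) (σ σ' : S) :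
    π (T σ) * r σ * (Q (T σ) (T σ') * r σ') = π (T σ') * r σ' * (Q (T σ') (T σ) * r σ) := by
  linear_combination r σ * r σ' * hQ (T σ) (T σ')

theorem two_level_CGMC_stationarity_general
    {S Sb : Type*} [Fintype S]
    [DecidableEq S]
    (T : S → Sb) (μ : S → ℝ) (μ0b : Sb → ℝ)
    (ρb : Sb → Sb → ℝ) (μr : S → Sb → ℝ)
    (hμpos : ∀ σ, 0 < μ σ)
    (hμ0bpos : ∀ η, 0 < μ0b η)
    (hρbnn : ∀ η η', 0 ≤ ρb η η')
    (hμrpos : ∀ σ, 0 < μr σ (T σ))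
    (αCG : Sb → Sb → ℝ)
    (hαCG : ∀ η η', 0 < ρb η η' →
      αCG η η' = min 1 ((μ0b η' * ρb η' η) / (μ0b η * ρb η η')))
    (αf : S → S → ℝ)
    (hαf : ∀ σ σ', αf σ σ' =
      min 1 ((μ σ' * μ0b (T σ) * μr σ (T σ)) /
             (μ σ * μ0b (T σ') * μr σ' (T σ'))))
    (KCG : S → S → ℝ)
    (hKCGoff : ∀ σ σ', σ ≠ σ' →
      KCG σ σ' = αf σ σ' * αCG (T σ) (T σ') * μr σ' (T σ') * ρb (T σ) (T σ'))
    (hKCGdiag : ∀ σ, KCG σ σ =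
      1 - ∑ σ' ∈ univ.filter (fun σ' => σ' ≠ σ), KCG σ σ') :
    ∀ σ' : S, ∑ σ, μ σ * KCG σ σ' = μ σ' := by
  have hcoarse : ∀ η η', μ0b η * (αCG η η' * ρb η η') = μ0b η' * (αCG η' η * ρb η' η) := by
    intro η η'
    rw [mul_acceptance_mul_proposal (hμ0bpos η) (hρbnn η η')
        (mul_nonneg (hμ0bpos η').le (hρbnn η' η)) (hαCG η η'),
      mul_acceptance_mul_proposal (hμ0bpos η') (hρbnn η' η)
        (mul_nonneg (hμ0bpos η).le (hρbnn η η')) (hαCG η' η), min_comm]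
  have hν : ∀ σ, 0 < μ0b (T σ) * μr σ (T σ) := fun σ => mul_pos (hμ0bpos _) (hμrpos σ)
  have hdb : ∀ σ σ', σ ≠ σ' → μ σ * KCG σ σ' = μ σ' * KCG σ' σ := by
    intro σ σ' hne
    have hmetropolis := metropolis_detailed_balance (hμpos σ) (hμpos σ') (hν σ) (hν σ')
      (reversible_lift T μ0b (fun η η' => αCG η η' * ρb η η') (fun σ => μr σ (T σ)) hcoarse σ σ')
    rw [hKCGoff σ σ' hne, hKCGoff σ' σ hne.symm, hαf, hαf]
    simp only [mul_assoc] at hmetropolis ⊢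
    linear_combination hmetropolis
  exact sum_mul_eq_of_detailed_balance μ KCG hKCGdiag hdb

/-- Detailed balance of the two-level CGMC kernel (Theorem 3.1(i)). -/
theorem two_level_CGMC_stationarity
    {S Sb : Type*} [Fintype S] [Fintype Sb] [Nonempty S] [Nonempty Sb]
    [DecidableEq S] [DecidableEq Sb]
    (T : S → Sb) (μ : S → ℝ) (μ0b : Sb → ℝ)
    (ρb : Sb → Sb → ℝ) (μr : S → Sb → ℝ)
    (hμpos : ∀ σ, 0 < μ σ) (hμsum : ∑ σ, μ σ = 1)
    (hμ0bpos : ∀ η, 0 < μ0b η)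
    (hρbnn : ∀ η η', 0 ≤ ρb η η') (hρbsum : ∀ η, ∑ η', ρb η η' = 1)
    (hμrnn : ∀ σ η, 0 ≤ μr σ η)
    (hμr0 : ∀ σ η, T σ ≠ η → μr σ η = 0)
    (hμrsum : ∀ η, (∃ σ, T σ = η) →
      ∑ σ ∈ univ.filter (fun σ => T σ = η), μr σ η = 1)
    (hμrpos : ∀ σ, 0 < μr σ (T σ))
    (αCG : Sb → Sb → ℝ)
    (hαCG : ∀ η η', 0 < ρb η η' →
      αCG η η' = min 1 ((μ0b η' * ρb η' η) / (μ0b η * ρb η η')))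
    (hαCG1 : ∀ η η', ¬ 0 < ρb η η' → αCG η η' = 1)
    (αf : S → S → ℝ)
    (hαf : ∀ σ σ', αf σ σ' =
      min 1 ((μ σ' * μ0b (T σ) * μr σ (T σ)) /
             (μ σ * μ0b (T σ') * μr σ' (T σ'))))
    (KCG : S → S → ℝ)
    (hKCGoff : ∀ σ σ', σ ≠ σ' →
      KCG σ σ' = αf σ σ' * αCG (T σ) (T σ') * μr σ' (T σ') * ρb (T σ) (T σ'))
    (hKCGdiag : ∀ σ, KCG σ σ =
      1 - ∑ σ' ∈ univ.filter (fun σ' => σ' ≠ σ), KCG σ σ') :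
    ∀ σ' : S, ∑ σ, μ σ * KCG σ σ' = μ σ' :=
  two_level_CGMC_stationarity_general T μ μ0b ρb μr hμpos hμ0bpos hρbnn hμrpos αCG hαCG αf hαf KCG
    hKCGoff hKCGdiag
end

section
/- Irreducibility of the two-level CGMC chain (Theorem 3.1(iii)): if in addition ρ̄(η,η') > 0 for all η, η' ∈ Σ̄, then K_CG(σ,σ') > 0 for all σ, σ' ∈ Σ with σ ≠ σ'; in particular, for every set A ⊆ Σ with ∑_{σ'∈A} μ(σ') > 0 and every σ ∈ Σ one has ∑_{σ'∈A, σ'≠σ} K_CG(σ,σ') > 0 provided A ≠ {σ}. -/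
/-!
Every factor of an off-diagonal entry of `K_CG` is positive: the two Metropolis acceptance
probabilities are minima of `1` and a ratio of positive quantities, the reconstruction density is
positive on its fibre, and the coarse proposal is positive by assumption. A set `A` of positive
`μ`-mass is nonempty, so if `A ≠ {σ}` it contains some `σ' ≠ σ`, whose entry `K_CG(σ,σ')` already
makes the sum positive.
-/

open Finset

lemma zero_lt_min_one_div {α : Type*} [Semifield α] [LinearOrder α] [IsStrictOrderedRing α]
    {a b : α} (ha : 0 < a) (hb : 0 < b) : 0 < min 1 (a / b) :=
  lt_min one_pos (div_pos ha hb)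

lemma Finset.sum_erase_pos_of_ne_singleton {ι M : Type*} [DecidableEq ι] [AddCommMonoid M]
    [PartialOrder M] [IsOrderedCancelAddMonoid M] {f : ι → M} {s : Finset ι} {a : ι}
    (hf : ∀ x ∈ s, x ≠ a → 0 < f x) (hs : s.Nonempty) (hsa : s ≠ {a}) :
    0 < ∑ x ∈ s.erase a, f x := by
  have hne : (s.erase a).Nonempty :=
    nonempty_iff_ne_empty.2 fun h => ((erase_eq_empty_iff s a).1 h).elim hs.ne_empty hsa
  exact sum_pos (fun x hx => hf x (mem_of_mem_erase hx) (ne_of_mem_erase hx)) hne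

theorem two_level_CGMC_irreducible_general
    {S Sb : Type*}
    [DecidableEq S]
    (T : S → Sb) (μ : S → ℝ) (μ0b : Sb → ℝ)
    (ρb : Sb → Sb → ℝ) (μr : S → Sb → ℝ)
    (hμpos : ∀ σ, 0 < μ σ)
    (hμ0bpos : ∀ η, 0 < μ0b η)
    (hμrpos : ∀ σ, 0 < μr σ (T σ))
    (αCG : Sb → Sb → ℝ)
    (hαCG : ∀ η η', 0 < ρb η η' →
      αCG η η' = min 1 ((μ0b η' * ρb η' η) / (μ0b η * ρb η η')))
    (αf : S → S → ℝ)
    (hαf : ∀ σ σ', αf σ σ' =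
      min 1 ((μ σ' * μ0b (T σ) * μr σ (T σ)) /
             (μ σ * μ0b (T σ') * μr σ' (T σ'))))
    (KCG : S → S → ℝ)
    (hKCGoff : ∀ σ σ', σ ≠ σ' →
      KCG σ σ' = αf σ σ' * αCG (T σ) (T σ') * μr σ' (T σ') * ρb (T σ) (T σ'))
    (hρbpos : ∀ η η', 0 < ρb η η') :
    (∀ σ σ', σ ≠ σ' → 0 < KCG σ σ') ∧
    (∀ (A : Finset S) (σ : S), 0 < ∑ σ' ∈ A, μ σ' → A ≠ {σ} →
      0 < ∑ σ' ∈ A.filter (fun σ' => σ' ≠ σ), KCG σ σ') := by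
  have hoff : ∀ σ σ', σ ≠ σ' → 0 < KCG σ σ' := by
    intro σ σ' hne
    have hαf_pos : 0 < αf σ σ' := hαf σ σ' ▸ zero_lt_min_one_div
      (mul_pos (mul_pos (hμpos σ') (hμ0bpos _)) (hμrpos σ))
      (mul_pos (mul_pos (hμpos σ) (hμ0bpos _)) (hμrpos σ'))
    have hαCG_pos : 0 < αCG (T σ) (T σ') := hαCG _ _ (hρbpos _ _) ▸ zero_lt_min_one_div
      (mul_pos (hμ0bpos _) (hρbpos _ _)) (mul_pos (hμ0bpos _) (hρbpos _ _))
    rw [hKCGoff σ σ' hne]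
    exact mul_pos (mul_pos (mul_pos hαf_pos hαCG_pos) (hμrpos σ')) (hρbpos _ _)
  refine ⟨hoff, fun A σ hA hAσ => ?_⟩
  rw [filter_ne']
  exact sum_erase_pos_of_ne_singleton (fun σ' _ hne => hoff σ σ' hne.symm)
    (nonempty_of_sum_ne_zero hA.ne') hAσ

/-- Detailed balance of the two-level CGMC kernel (Theorem 3.1(i)). -/
theorem two_level_CGMC_irreducible
    {S Sb : Type*} [Fintype S] [Fintype Sb] [Nonempty S] [Nonempty Sb]
    [DecidableEq S] [DecidableEq Sb]
    (T : S → Sb) (μ : S → ℝ) (μ0b : Sb → ℝ)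
    (ρb : Sb → Sb → ℝ) (μr : S → Sb → ℝ)
    (hμpos : ∀ σ, 0 < μ σ) (hμsum : ∑ σ, μ σ = 1)
    (hμ0bpos : ∀ η, 0 < μ0b η)
    (hρbnn : ∀ η η', 0 ≤ ρb η η') (hρbsum : ∀ η, ∑ η', ρb η η' = 1)
    (hμrnn : ∀ σ η, 0 ≤ μr σ η)
    (hμr0 : ∀ σ η, T σ ≠ η → μr σ η = 0)
    (hμrsum : ∀ η, (∃ σ, T σ = η) →
      ∑ σ ∈ univ.filter (fun σ => T σ = η), μr σ η = 1)
    (hμrpos : ∀ σ, 0 < μr σ (T σ))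
    (αCG : Sb → Sb → ℝ)
    (hαCG : ∀ η η', 0 < ρb η η' →
      αCG η η' = min 1 ((μ0b η' * ρb η' η) / (μ0b η * ρb η η')))
    (hαCG1 : ∀ η η', ¬ 0 < ρb η η' → αCG η η' = 1)
    (αf : S → S → ℝ)
    (hαf : ∀ σ σ', αf σ σ' =
      min 1 ((μ σ' * μ0b (T σ) * μr σ (T σ)) /
             (μ σ * μ0b (T σ') * μr σ' (T σ'))))
    (KCG : S → S → ℝ)
    (hKCGoff : ∀ σ σ', σ ≠ σ' →
      KCG σ σ' = αf σ σ' * αCG (T σ) (T σ') * μr σ' (T σ') * ρb (T σ) (T σ'))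
    (hKCGdiag : ∀ σ, KCG σ σ =
      1 - ∑ σ' ∈ univ.filter (fun σ' => σ' ≠ σ), KCG σ σ')
    (hρbpos : ∀ η η', 0 < ρb η η') :
    (∀ σ σ', σ ≠ σ' → 0 < KCG σ σ') ∧
    (∀ (A : Finset S) (σ : S), 0 < ∑ σ' ∈ A, μ σ' → A ≠ {σ} →
      0 < ∑ σ' ∈ A.filter (fun σ' => σ' ≠ σ), KCG σ σ') :=
  two_level_CGMC_irreducible_general T μ μ0b ρb μr hμpos hμ0bpos hμrpos αCG hαCG αf hαf KCG hKCGoff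
    hρbpos
end

section
/- Detailed balance of the one-step proposal kernel with respect to the product measure: define Q(σ,σ') = α_CG(Tσ,Tσ') ρ̄(Tσ,Tσ') μ_r(σ'|Tσ') and μ₀(σ) = μ̄⁰(Tσ) μ_r(σ|Tσ). Then for all σ, σ' ∈ Σ, Q(σ,σ') μ₀(σ) = Q(σ',σ) μ₀(σ'). -/
/-!
The Metropolis–Hastings acceptance `min 1 (q / p)` turns the probability flux `p` of a move into
`min p q`, which is symmetric in the move and its reverse. On the coarse level this is detailed
balance of the accepted proposal for `μ̄⁰`; the reconstruction factors `μ_r(σ'|Tσ') μ_r(σ|Tσ)`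
appear on both sides unchanged.
-/

open Finset

/-- At `p = 0` both sides vanish, because `q / 0 = 0` and `q ≥ 0`. -/
lemma min_one_div_mul_eq_min {p q : ℝ} (hp : 0 ≤ p) (hq : 0 ≤ q) :
    min 1 (q / p) * p = min p q := by
  rcases hp.eq_or_lt with rfl | hp
  · simp [hq]
  · rw [min_mul_of_nonneg _ _ hp.le, one_mul, div_mul_cancel₀ _ hp.ne']

lemma acceptance_mul_flux_eq_min {α a b x y : ℝ} (ha : 0 ≤ a) (hb : 0 ≤ b)
    (hx : 0 ≤ x) (hy : 0 ≤ y)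
    (hα : 0 < x → α = min 1 (b * y / (a * x))) (hα1 : ¬ 0 < x → α = 1) :
    α * x * a = min (a * x) (b * y) := by
  by_cases hxpos : 0 < x
  · rw [hα hxpos, mul_assoc, mul_comm x a,
      min_one_div_mul_eq_min (mul_nonneg ha hx) (mul_nonneg hb hy)]
  · obtain rfl : x = 0 := le_antisymm (not_lt.mp hxpos) hx
    simp [mul_nonneg hb hy]

theorem proposal_kernel_detailed_balance_general
    {S Sb : Type*}
    (T : S → Sb) (μ0b : Sb → ℝ)
    (ρb : Sb → Sb → ℝ) (μr : S → Sb → ℝ)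
    (hμ0bpos : ∀ η, 0 < μ0b η)
    (hρbnn : ∀ η η', 0 ≤ ρb η η')
    (αCG : Sb → Sb → ℝ)
    (hαCG : ∀ η η', 0 < ρb η η' →
      αCG η η' = min 1 ((μ0b η' * ρb η' η) / (μ0b η * ρb η η')))
    (hαCG1 : ∀ η η', ¬ 0 < ρb η η' → αCG η η' = 1)
    (Q : S → S → ℝ)
    (hQ : ∀ σ σ', Q σ σ' = αCG (T σ) (T σ') * ρb (T σ) (T σ') * μr σ' (T σ'))
    (μ0 : S → ℝ)
    (hμ0 : ∀ σ, μ0 σ = μ0b (T σ) * μr σ (T σ)) :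
    ∀ σ σ' : S, Q σ σ' * μ0 σ = Q σ' σ * μ0 σ' := by
  have coarse_flux (η η' : Sb) :
      αCG η η' * ρb η η' * μ0b η = min (μ0b η * ρb η η') (μ0b η' * ρb η' η) :=
    acceptance_mul_flux_eq_min (hμ0bpos η).le (hμ0bpos η').le (hρbnn η η') (hρbnn η' η)
      (hαCG η η') (hαCG1 η η')
  intro σ σ'
  calc Q σ σ' * μ0 σ
      = (αCG (T σ) (T σ') * ρb (T σ) (T σ') * μ0b (T σ)) * (μr σ' (T σ') * μr σ (T σ)) := by
        rw [hQ, hμ0]; ring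
    _ = (αCG (T σ') (T σ) * ρb (T σ') (T σ) * μ0b (T σ')) * (μr σ' (T σ') * μr σ (T σ)) := by
        rw [coarse_flux, coarse_flux, min_comm]
    _ = Q σ' σ * μ0 σ' := by
        rw [hQ, hμ0]; ring

/-- Detailed balance of the one-step proposal kernel `Q` with respect to the
product measure `μ₀(σ) = μ̄⁰(Tσ) μ_r(σ|Tσ)`. -/
theorem proposal_kernel_detailed_balance
    {S Sb : Type*} [Fintype S] [Fintype Sb] [Nonempty S] [Nonempty Sb]
    [DecidableEq S] [DecidableEq Sb]
    (T : S → Sb) (μ : S → ℝ) (μ0b : Sb → ℝ)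
    (ρb : Sb → Sb → ℝ) (μr : S → Sb → ℝ)
    (hμpos : ∀ σ, 0 < μ σ) (hμsum : ∑ σ, μ σ = 1)
    (hμ0bpos : ∀ η, 0 < μ0b η)
    (hρbnn : ∀ η η', 0 ≤ ρb η η') (hρbsum : ∀ η, ∑ η', ρb η η' = 1)
    (hμrnn : ∀ σ η, 0 ≤ μr σ η)
    (hμr0 : ∀ σ η, T σ ≠ η → μr σ η = 0)
    (hμrsum : ∀ η, (∃ σ, T σ = η) →
      ∑ σ ∈ univ.filter (fun σ => T σ = η), μr σ η = 1)
    (hμrpos : ∀ σ, 0 < μr σ (T σ))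
    (αCG : Sb → Sb → ℝ)
    (hαCG : ∀ η η', 0 < ρb η η' →
      αCG η η' = min 1 ((μ0b η' * ρb η' η) / (μ0b η * ρb η η')))
    (hαCG1 : ∀ η η', ¬ 0 < ρb η η' → αCG η η' = 1)
    (Q : S → S → ℝ)
    (hQ : ∀ σ σ', Q σ σ' = αCG (T σ) (T σ') * ρb (T σ) (T σ') * μr σ' (T σ'))
    (μ0 : S → ℝ)
    (hμ0 : ∀ σ, μ0 σ = μ0b (T σ) * μr σ (T σ)) :
    ∀ σ σ' : S, Q σ σ' * μ0 σ = Q σ' σ * μ0 σ' :=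
  proposal_kernel_detailed_balance_general T μ0b ρb μr hμ0bpos hρbnn αCG hαCG hαCG1 Q hQ μ0 hμ0
end

section
/- Case C₁ of Lemma 4.1: for σ ≠ σ', if either (α(σ,σ') < 1, α_CG(Tσ,Tσ') < 1, α_f(σ,σ') < 1) or (α(σ,σ') = 1, α_CG(Tσ,Tσ') = 1, α_f(σ,σ') = 1), then K_CG(σ,σ') = B(σ,σ') K_c(σ,σ'). -/
open Finset

/-! When all three acceptance probabilities are below one, each `min` is its second argument and
the coarse ratio `μ̄⁰(Tσ') / μ̄⁰(Tσ)` cancels against the one inside `α_f`, leaving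
`(μ(σ') / μ(σ)) μ_r(σ|Tσ) ρ̄`; when all three equal one, both kernels are bare proposals.
In either case the remaining factor `ρ̄ / ρ` times the appropriate `μ_r` is `B`. -/

theorem min_eq_right_of_min_lt_left {α : Type*} [LinearOrder α] {a b : α} (h : min a b < a) :
    min a b = b :=
  min_eq_right ((min_lt_iff.mp h).resolve_left (lt_irrefl a)).le

theorem two_level_CGMC_case_C1_general
    {S Sb : Type*}
    (T : S → Sb) (μ : S → ℝ) (μ0b : Sb → ℝ)
    (ρb : Sb → Sb → ℝ) (μr : S → Sb → ℝ) (ρ : S → S → ℝ)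
    (hμ0bpos : ∀ η, 0 < μ0b η)
    (hμrpos : ∀ σ, 0 < μr σ (T σ))
    (hρpos : ∀ σ σ', σ ≠ σ' → 0 < ρ σ σ')
    (α : S → S → ℝ) (hα : ∀ σ σ', α σ σ' = min 1 (μ σ' / μ σ))
    (αCG : Sb → Sb → ℝ) (hαCG : ∀ η η', αCG η η' = min 1 (μ0b η' / μ0b η))
    (αf : S → S → ℝ)
    (hαf : ∀ σ σ', αf σ σ' =
      min 1 ((μ σ' * μ0b (T σ) * μr σ (T σ)) /
             (μ σ * μ0b (T σ') * μr σ' (T σ'))))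
    (Kc : S → S → ℝ)
    (hKc : ∀ σ σ', σ ≠ σ' → Kc σ σ' = α σ σ' * ρ σ σ')
    (KCG : S → S → ℝ)
    (hKCG : ∀ σ σ', σ ≠ σ' →
      KCG σ σ' = αf σ σ' * αCG (T σ) (T σ') * μr σ' (T σ') * ρb (T σ) (T σ'))
    (B : S → S → ℝ)
    (hB1 : ∀ σ σ', σ ≠ σ' → αf σ σ' = 1 →
      B σ σ' = ρb (T σ) (T σ') / ρ σ σ' * μr σ' (T σ'))
    (hB2 : ∀ σ σ', σ ≠ σ' → αf σ σ' < 1 →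
      B σ σ' = ρb (T σ) (T σ') / ρ σ σ' * μr σ (T σ))
    :
    ∀ σ σ', σ ≠ σ' →
      ((α σ σ' < 1 ∧ αCG (T σ) (T σ') < 1 ∧ αf σ σ' < 1) ∨
       (α σ σ' = 1 ∧ αCG (T σ) (T σ') = 1 ∧ αf σ σ' = 1)) →
      KCG σ σ' = B σ σ' * Kc σ σ' := by
  intro σ σ' hne hcase
  have hρ := (hρpos σ σ' hne).ne'
  rw [hKCG σ σ' hne, hKc σ σ' hne]
  rcases hcase with ⟨ha, hcg, hf⟩ | ⟨ha, hcg, hf⟩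
  · rw [hB2 σ σ' hne hf]
    rw [hα] at ha ⊢; rw [hαCG] at hcg ⊢; rw [hαf] at hf ⊢
    rw [min_eq_right_of_min_lt_left ha, min_eq_right_of_min_lt_left hcg,
      min_eq_right_of_min_lt_left hf]
    have hμ0b := (hμ0bpos (T σ)).ne'
    have hμ0b' := (hμ0bpos (T σ')).ne'
    have hμr' := (hμrpos σ').ne'
    field_simp
  · rw [hB1 σ σ' hne hf, hf, hcg, ha]
    field_simp

theorem two_level_CGMC_case_C1
    {S Sb : Type*} [Fintype S] [Fintype Sb] [Nonempty S] [Nonempty Sb]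
    [DecidableEq S] [DecidableEq Sb]
    (T : S → Sb) (μ : S → ℝ) (μ0b : Sb → ℝ)
    (ρb : Sb → Sb → ℝ) (μr : S → Sb → ℝ) (ρ : S → S → ℝ)
    (hμpos : ∀ σ, 0 < μ σ) (hμsum : ∑ σ, μ σ = 1)
    (hμ0bpos : ∀ η, 0 < μ0b η)
    (hρbnn : ∀ η η', 0 ≤ ρb η η') (hρbsym : ∀ η η', ρb η η' = ρb η' η)
    (hρbsum : ∀ η, ∑ η', ρb η η' = 1)
    (hμrnn : ∀ σ η, 0 ≤ μr σ η)
    (hμr0 : ∀ σ η, T σ ≠ η → μr σ η = 0)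
    (hμrsum : ∀ η, (∃ σ, T σ = η) →
      ∑ σ ∈ univ.filter (fun σ => T σ = η), μr σ η = 1)
    (hμrpos : ∀ σ, 0 < μr σ (T σ))
    (hρnn : ∀ σ σ', 0 ≤ ρ σ σ') (hρsym : ∀ σ σ', ρ σ σ' = ρ σ' σ)
    (hρsum : ∀ σ, ∑ σ', ρ σ σ' = 1)
    (hρpos : ∀ σ σ', σ ≠ σ' → 0 < ρ σ σ')
    (α : S → S → ℝ) (hα : ∀ σ σ', α σ σ' = min 1 (μ σ' / μ σ))
    (αCG : Sb → Sb → ℝ) (hαCG : ∀ η η', αCG η η' = min 1 (μ0b η' / μ0b η))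
    (αf : S → S → ℝ)
    (hαf : ∀ σ σ', αf σ σ' =
      min 1 ((μ σ' * μ0b (T σ) * μr σ (T σ)) /
             (μ σ * μ0b (T σ') * μr σ' (T σ'))))
    (Kc : S → S → ℝ)
    (hKc : ∀ σ σ', σ ≠ σ' → Kc σ σ' = α σ σ' * ρ σ σ')
    (KCG : S → S → ℝ)
    (hKCG : ∀ σ σ', σ ≠ σ' →
      KCG σ σ' = αf σ σ' * αCG (T σ) (T σ') * μr σ' (T σ') * ρb (T σ) (T σ'))
    (B : S → S → ℝ)
    (hB1 : ∀ σ σ', σ ≠ σ' → αf σ σ' = 1 →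
      B σ σ' = ρb (T σ) (T σ') / ρ σ σ' * μr σ' (T σ'))
    (hB2 : ∀ σ σ', σ ≠ σ' → αf σ σ' < 1 →
      B σ σ' = ρb (T σ) (T σ') / ρ σ σ' * μr σ (T σ))
    :
    ∀ σ σ', σ ≠ σ' →
      ((α σ σ' < 1 ∧ αCG (T σ) (T σ') < 1 ∧ αf σ σ' < 1) ∨
       (α σ σ' = 1 ∧ αCG (T σ) (T σ') = 1 ∧ αf σ σ' = 1)) →
      KCG σ σ' = B σ σ' * Kc σ σ' :=
  two_level_CGMC_case_C1_general T μ μ0b ρb μr ρ hμ0bpos hμrpos hρpos α hα αCG hαCG αf hαf Kc hKc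
    KCG hKCG B hB1 hB2
end

section
/- Case C₂ of Lemma 4.1: for σ ≠ σ', if either (α(σ,σ') = 1, α_CG(Tσ,Tσ') < 1, α_f(σ,σ') = 1) or (α(σ,σ') < 1, α_CG(Tσ,Tσ') = 1, α_f(σ,σ') < 1), then K_CG(σ,σ') = min{μ̄⁰(Tσ')/μ̄⁰(Tσ), μ̄⁰(Tσ)/μ̄⁰(Tσ')} · B(σ,σ') · K_c(σ,σ'). -/
open Finset

theorem eq_of_eq_min_of_lt {α : Type*} [LinearOrder α] {a b x : α}
    (h : a = min b x) (hlt : a < b) : a = x := by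
  rw [h] at hlt ⊢
  exact min_eq_right (min_lt_iff.mp hlt |>.resolve_left (lt_irrefl b)).le

theorem le_of_eq_min_of_eq {α : Type*} [LinearOrder α] {a b x : α}
    (h : a = min b x) (hab : a = b) : b ≤ x :=
  min_eq_left_iff.mp (h ▸ hab)

theorem min_div_div_eq_left_of_le {a b : ℝ} (ha : 0 < a) (hb : 0 < b) (h : b ≤ a) :
    min (b / a) (a / b) = b / a :=
  min_eq_left <| ((div_le_one ha).mpr h).trans ((one_le_div hb).mpr h)

theorem two_level_CGMC_case_C2_general
    {S Sb : Type*}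
    (T : S → Sb) (μ : S → ℝ) (μ0b : Sb → ℝ)
    (ρb : Sb → Sb → ℝ) (μr : S → Sb → ℝ) (ρ : S → S → ℝ)
    (hμ0bpos : ∀ η, 0 < μ0b η)
    (hμrpos : ∀ σ, 0 < μr σ (T σ))
    (hρpos : ∀ σ σ', σ ≠ σ' → 0 < ρ σ σ')
    (α : S → S → ℝ) (hα : ∀ σ σ', α σ σ' = min 1 (μ σ' / μ σ))
    (αCG : Sb → Sb → ℝ) (hαCG : ∀ η η', αCG η η' = min 1 (μ0b η' / μ0b η))
    (αf : S → S → ℝ)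
    (hαf : ∀ σ σ', αf σ σ' =
      min 1 ((μ σ' * μ0b (T σ) * μr σ (T σ)) /
             (μ σ * μ0b (T σ') * μr σ' (T σ'))))
    (Kc : S → S → ℝ)
    (hKc : ∀ σ σ', σ ≠ σ' → Kc σ σ' = α σ σ' * ρ σ σ')
    (KCG : S → S → ℝ)
    (hKCG : ∀ σ σ', σ ≠ σ' →
      KCG σ σ' = αf σ σ' * αCG (T σ) (T σ') * μr σ' (T σ') * ρb (T σ) (T σ'))
    (B : S → S → ℝ)
    (hB1 : ∀ σ σ', σ ≠ σ' → αf σ σ' = 1 →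
      B σ σ' = ρb (T σ) (T σ') / ρ σ σ' * μr σ' (T σ'))
    (hB2 : ∀ σ σ', σ ≠ σ' → αf σ σ' < 1 →
      B σ σ' = ρb (T σ) (T σ') / ρ σ σ' * μr σ (T σ))
    :
    ∀ σ σ', σ ≠ σ' →
      ((α σ σ' = 1 ∧ αCG (T σ) (T σ') < 1 ∧ αf σ σ' = 1) ∨
       (α σ σ' < 1 ∧ αCG (T σ) (T σ') = 1 ∧ αf σ σ' < 1)) →
      KCG σ σ' = min (μ0b (T σ') / μ0b (T σ)) (μ0b (T σ) / μ0b (T σ')) *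
        B σ σ' * Kc σ σ' := by
  intro σ σ' hne hcase
  have hρ := (hρpos σ σ' hne).ne'
  have hμr' := (hμrpos σ').ne'
  have hμ0 := hμ0bpos (T σ)
  have hμ0' := hμ0bpos (T σ')
  rw [hKCG σ σ' hne, hKc σ σ' hne]
  rcases hcase with ⟨hα1, hαCG_lt, hαf1⟩ | ⟨hα_lt, hαCG1, hαf_lt⟩
  · have hαCG' := eq_of_eq_min_of_lt (hαCG _ _) hαCG_lt
    have hle : μ0b (T σ') ≤ μ0b (T σ) := (div_le_one hμ0).mp (hαCG' ▸ hαCG_lt).le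
    rw [hB1 σ σ' hne hαf1, hαf1, hα1, hαCG', min_div_div_eq_left_of_le hμ0 hμ0' hle]
    field_simp
  · have hle : μ0b (T σ) ≤ μ0b (T σ') :=
      (one_le_div hμ0).mp (le_of_eq_min_of_eq (hαCG _ _) hαCG1)
    rw [hB2 σ σ' hne hαf_lt, hαCG1, eq_of_eq_min_of_lt (hαf _ _) hαf_lt,
      eq_of_eq_min_of_lt (hα _ _) hα_lt, min_comm, min_div_div_eq_left_of_le hμ0' hμ0 hle]
    field_simp

theorem two_level_CGMC_case_C2
    {S Sb : Type*} [Fintype S] [Fintype Sb] [Nonempty S] [Nonempty Sb]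
    [DecidableEq S] [DecidableEq Sb]
    (T : S → Sb) (μ : S → ℝ) (μ0b : Sb → ℝ)
    (ρb : Sb → Sb → ℝ) (μr : S → Sb → ℝ) (ρ : S → S → ℝ)
    (hμpos : ∀ σ, 0 < μ σ) (hμsum : ∑ σ, μ σ = 1)
    (hμ0bpos : ∀ η, 0 < μ0b η)
    (hρbnn : ∀ η η', 0 ≤ ρb η η') (hρbsym : ∀ η η', ρb η η' = ρb η' η)
    (hρbsum : ∀ η, ∑ η', ρb η η' = 1)
    (hμrnn : ∀ σ η, 0 ≤ μr σ η)
    (hμr0 : ∀ σ η, T σ ≠ η → μr σ η = 0)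
    (hμrsum : ∀ η, (∃ σ, T σ = η) →
      ∑ σ ∈ univ.filter (fun σ => T σ = η), μr σ η = 1)
    (hμrpos : ∀ σ, 0 < μr σ (T σ))
    (hρnn : ∀ σ σ', 0 ≤ ρ σ σ') (hρsym : ∀ σ σ', ρ σ σ' = ρ σ' σ)
    (hρsum : ∀ σ, ∑ σ', ρ σ σ' = 1)
    (hρpos : ∀ σ σ', σ ≠ σ' → 0 < ρ σ σ')
    (α : S → S → ℝ) (hα : ∀ σ σ', α σ σ' = min 1 (μ σ' / μ σ))
    (αCG : Sb → Sb → ℝ) (hαCG : ∀ η η', αCG η η' = min 1 (μ0b η' / μ0b η))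
    (αf : S → S → ℝ)
    (hαf : ∀ σ σ', αf σ σ' =
      min 1 ((μ σ' * μ0b (T σ) * μr σ (T σ)) /
             (μ σ * μ0b (T σ') * μr σ' (T σ'))))
    (Kc : S → S → ℝ)
    (hKc : ∀ σ σ', σ ≠ σ' → Kc σ σ' = α σ σ' * ρ σ σ')
    (KCG : S → S → ℝ)
    (hKCG : ∀ σ σ', σ ≠ σ' →
      KCG σ σ' = αf σ σ' * αCG (T σ) (T σ') * μr σ' (T σ') * ρb (T σ) (T σ'))
    (B : S → S → ℝ)
    (hB1 : ∀ σ σ', σ ≠ σ' → αf σ σ' = 1 →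
      B σ σ' = ρb (T σ) (T σ') / ρ σ σ' * μr σ' (T σ'))
    (hB2 : ∀ σ σ', σ ≠ σ' → αf σ σ' < 1 →
      B σ σ' = ρb (T σ) (T σ') / ρ σ σ' * μr σ (T σ))
    :
    ∀ σ σ', σ ≠ σ' →
      ((α σ σ' = 1 ∧ αCG (T σ) (T σ') < 1 ∧ αf σ σ' = 1) ∨
       (α σ σ' < 1 ∧ αCG (T σ) (T σ') = 1 ∧ αf σ σ' < 1)) →
      KCG σ σ' = min (μ0b (T σ') / μ0b (T σ)) (μ0b (T σ) / μ0b (T σ')) *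
        B σ σ' * Kc σ σ' :=
  two_level_CGMC_case_C2_general T μ μ0b ρb μr ρ hμ0bpos hμrpos hρpos α hα αCG hαCG αf hαf Kc hKc
    KCG hKCG B hB1 hB2
end

section
/- Comparison of spectral gaps (Lemma 4.3, Diaconis–Saloff-Coste): let Σ be a nonempty finite set, μ and μ' positive probability densities on Σ, and K, K' nonnegative kernels on Σ with stationary densities μ and μ' respectively. Define Dirichlet forms E(f,f) = (1/2)∑_{σ,σ'} |f(σ)−f(σ')|² K(σ,σ') μ(σ) and E'(f,f) = (1/2)∑_{σ,σ'} |f(σ)−f(σ')|² K'(σ,σ') μ'(σ), variances Var(f) = (1/2)∑_{σ,σ'} |f(σ)−f(σ')|² μ(σ)μ(σ') and Var'(f) analogously with μ', and spectral gaps λ = inf{E(f,f)/Var(f) : Var(f) ≠ 0}, λ' = inf{E'(f,f)/Var'(f) : Var'(f) ≠ 0}. If there exist constants A > 0 and a > 0 such that E'(f,f) ≤ A·E(f,f) for every f : Σ → ℝ and a·μ(σ) ≤ μ'(σ) for every σ ∈ Σ, then λ' ≤ (A/a)·λ. -/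
/-!
Since the variance is the least second moment `∑ (f σ - c) ^ 2 * ν σ` over all centres `c`, the
pointwise bound `a • μ ≤ μ'` gives `a • Var ≤ Var'`. Together with `E' ≤ A • E` every Rayleigh
quotient satisfies `E' f / Var' f ≤ (A / a) * (E f / Var f)`, and both infima range over the same
functions, the nonconstant ones.
-/

open Finset

open scoped Pointwise

section Variance

variable {S : Type*} [Fintype S]

noncomputable def pairVariance (ν : S → ℝ) (f : S → ℝ) : ℝ :=
  (1 / 2) * ∑ σ, ∑ σ', |f σ - f σ'| ^ 2 * ν σ * ν σ'

noncomputable def dirichletForm (K : S → S → ℝ) (ν : S → ℝ) (f : S → ℝ) : ℝ :=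
  (1 / 2) * ∑ σ, ∑ σ', |f σ - f σ'| ^ 2 * K σ σ' * ν σ

theorem dirichletForm_nonneg {K : S → S → ℝ} {ν : S → ℝ} (hK : ∀ σ σ', 0 ≤ K σ σ')
    (hν : ∀ σ, 0 ≤ ν σ) (f : S → ℝ) : 0 ≤ dirichletForm K ν f := by
  refine mul_nonneg (by norm_num) (sum_nonneg fun σ _ => sum_nonneg fun σ' _ => ?_)
  have := hK σ σ'; have := hν σ
  positivity

/-- The parallel-axis identity. -/
theorem pairVariance_add_sq_eq {ν : S → ℝ} (hν : ∑ σ, ν σ = 1) (f : S → ℝ) (c : ℝ) :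
    pairVariance ν f + (∑ τ, f τ * ν τ - c) ^ 2 = ∑ σ, (f σ - c) ^ 2 * ν σ := by
  set g := fun σ => f σ - c
  have hmean : ∑ τ, f τ * ν τ - c = ∑ τ, g τ * ν τ := by
    simp [g, sub_mul, sum_sub_distrib, ← mul_sum, hν]
  have hpair (σ σ' : S) : |f σ - f σ'| ^ 2 * ν σ * ν σ'
      = g σ ^ 2 * ν σ * ν σ' + ν σ * (g σ' ^ 2 * ν σ') - 2 * (g σ * ν σ) * (g σ' * ν σ') := by
    simp only [g, sq_abs]; ring
  simp only [pairVariance, hpair, sum_add_distrib, sum_sub_distrib, ← mul_sum, ← sum_mul, hν,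
    hmean]
  ring

theorem pairVariance_le_sum_sq_sub {ν : S → ℝ} (hν : ∑ σ, ν σ = 1) (f : S → ℝ) (c : ℝ) :
    pairVariance ν f ≤ ∑ σ, (f σ - c) ^ 2 * ν σ := by
  rw [← pairVariance_add_sq_eq hν f c]
  exact le_add_of_nonneg_right (sq_nonneg _)

theorem pairVariance_eq_sum_sq_sub_mean {ν : S → ℝ} (hν : ∑ σ, ν σ = 1) (f : S → ℝ) :
    pairVariance ν f = ∑ σ, (f σ - ∑ τ, f τ * ν τ) ^ 2 * ν σ := by
  simpa using pairVariance_add_sq_eq hν f (∑ τ, f τ * ν τ)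

theorem pairVariance_nonneg {ν : S → ℝ} (hν : ∀ σ, 0 ≤ ν σ) (f : S → ℝ) :
    0 ≤ pairVariance ν f := by
  refine mul_nonneg (by norm_num) (sum_nonneg fun σ _ => sum_nonneg fun σ' _ => ?_)
  have := hν σ; have := hν σ'
  positivity

theorem pairVariance_eq_zero_iff {ν : S → ℝ} (hν : ∀ σ, 0 < ν σ) (f : S → ℝ) :
    pairVariance ν f = 0 ↔ ∀ σ σ', f σ = f σ' := by
  have hterm (σ σ' : S) : 0 ≤ |f σ - f σ'| ^ 2 * ν σ * ν σ' := by
    have := hν σ; have := hν σ'; positivity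
  constructor
  · intro h σ σ'
    have hsum : ∑ σ, ∑ σ', |f σ - f σ'| ^ 2 * ν σ * ν σ' = 0 := by simpa [pairVariance] using h
    rw [sum_eq_zero_iff_of_nonneg fun σ _ => sum_nonneg fun σ' _ => hterm σ σ'] at hsum
    have := (sum_eq_zero_iff_of_nonneg fun σ' _ => hterm σ σ').1 (hsum σ (mem_univ σ)) σ'
      (mem_univ σ')
    simpa [sub_eq_zero, (hν σ).ne', (hν σ').ne'] using this
  · intro h
    simp [pairVariance, sub_eq_zero.2 (h _ _)]

theorem mul_pairVariance_le {μ μ' : S → ℝ} (hμ : ∑ σ, μ σ = 1) (hμ' : ∑ σ, μ' σ = 1) {a : ℝ}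
    (ha : 0 ≤ a) (hμμ' : ∀ σ, a * μ σ ≤ μ' σ) (f : S → ℝ) :
    a * pairVariance μ f ≤ pairVariance μ' f := by
  -- compare both variances with the second moment of `f` about its `μ'`-mean
  set m' := ∑ τ, f τ * μ' τ
  calc a * pairVariance μ f ≤ a * ∑ σ, (f σ - m') ^ 2 * μ σ :=
        mul_le_mul_of_nonneg_left (pairVariance_le_sum_sq_sub hμ f m') ha
    _ = ∑ σ, (f σ - m') ^ 2 * (a * μ σ) := by
        rw [mul_sum]; exact sum_congr rfl fun σ _ => by ring
    _ ≤ ∑ σ, (f σ - m') ^ 2 * μ' σ :=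
        sum_le_sum fun σ _ => mul_le_mul_of_nonneg_left (hμμ' σ) (sq_nonneg _)
    _ = pairVariance μ' f := (pairVariance_eq_sum_sq_sub_mean hμ' f).symm

end Variance

theorem sInf_le_mul_sInf_of_le_mul {ι : Type*} {p : ι → Prop} {g g' : ι → ℝ} {c : ℝ}
    (hc : 0 ≤ c) (hg' : ∀ i, p i → 0 ≤ g' i) (h : ∀ i, p i → g' i ≤ c * g i) :
    sInf {r | ∃ i, p i ∧ r = g' i} ≤ c * sInf {r | ∃ i, p i ∧ r = g i} := by
  by_cases hp : ∃ i, p i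
  · obtain ⟨i₀, hi₀⟩ := hp
    rw [← smul_eq_mul, ← Real.sInf_smul_of_nonneg hc]
    refine le_csInf ⟨c • g i₀, _, ⟨i₀, hi₀, rfl⟩, rfl⟩ ?_
    rintro _ ⟨_, ⟨i, hi, rfl⟩, rfl⟩
    have hbdd : BddBelow {r | ∃ i, p i ∧ r = g' i} := ⟨0, by rintro _ ⟨j, hj, rfl⟩; exact hg' j hj⟩
    exact (csInf_le hbdd ⟨i, hi, rfl⟩).trans (h i hi)
  · push Not at hp
    simp [hp]

theorem spectral_gap_comparison_general
    {S : Type*} [Fintype S]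
    (μ μ' : S → ℝ)
    (hμpos : ∀ σ, 0 < μ σ) (hμsum : ∑ σ, μ σ = 1)
    (hμ'pos : ∀ σ, 0 < μ' σ) (hμ'sum : ∑ σ, μ' σ = 1)
    (K K' : S → S → ℝ)
    (hK'nn : ∀ σ σ', 0 ≤ K' σ σ')
    (E E' V V' : (S → ℝ) → ℝ)
    (hE : ∀ f, E f = (1 / 2) * ∑ σ, ∑ σ', |f σ - f σ'| ^ 2 * K σ σ' * μ σ)
    (hE' : ∀ f, E' f = (1 / 2) * ∑ σ, ∑ σ', |f σ - f σ'| ^ 2 * K' σ σ' * μ' σ)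
    (hV : ∀ f, V f = (1 / 2) * ∑ σ, ∑ σ', |f σ - f σ'| ^ 2 * μ σ * μ σ')
    (hV' : ∀ f, V' f = (1 / 2) * ∑ σ, ∑ σ', |f σ - f σ'| ^ 2 * μ' σ * μ' σ')
    (lam lam' : ℝ)
    (hlam : lam = sInf {r : ℝ | ∃ f : S → ℝ, V f ≠ 0 ∧ r = E f / V f})
    (hlam' : lam' = sInf {r : ℝ | ∃ f : S → ℝ, V' f ≠ 0 ∧ r = E' f / V' f})
    (A a : ℝ) (hA : 0 < A) (ha : 0 < a)
    (hEcomp : ∀ f : S → ℝ, E' f ≤ A * E f)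
    (hμcomp : ∀ σ, a * μ σ ≤ μ' σ) :
    lam' ≤ (A / a) * lam := by
  obtain rfl : E = dirichletForm K μ := funext hE
  obtain rfl : E' = dirichletForm K' μ' := funext hE'
  obtain rfl : V = pairVariance μ := funext hV
  obtain rfl : V' = pairVariance μ' := funext hV'
  have hVnn (f : S → ℝ) : 0 ≤ pairVariance μ f := pairVariance_nonneg (fun σ => (hμpos σ).le) f
  have hVV' (f : S → ℝ) : a * pairVariance μ f ≤ pairVariance μ' f :=
    mul_pairVariance_le hμsum hμ'sum ha.le hμcomp f
  have hE'nn := dirichletForm_nonneg hK'nn fun σ => (hμ'pos σ).le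
  have hV'_ne_zero (f : S → ℝ) : pairVariance μ' f ≠ 0 ↔ pairVariance μ f ≠ 0 := by
    rw [ne_eq, ne_eq, pairVariance_eq_zero_iff hμpos, pairVariance_eq_zero_iff hμ'pos]
  simp_rw [hlam, hlam', hV'_ne_zero]
  refine sInf_le_mul_sInf_of_le_mul (by positivity) (fun f _ => ?_) fun f hf => ?_
  · exact div_nonneg (hE'nn f) ((mul_nonneg ha.le (hVnn f)).trans (hVV' f))
  have hVpos : 0 < a * pairVariance μ f := mul_pos ha ((hVnn f).lt_of_ne' hf)
  calc dirichletForm K' μ' f / pairVariance μ' f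
      ≤ dirichletForm K' μ' f / (a * pairVariance μ f) :=
        div_le_div_of_nonneg_left (hE'nn f) hVpos (hVV' f)
    _ ≤ A * dirichletForm K μ f / (a * pairVariance μ f) :=
        div_le_div_of_nonneg_right (hEcomp f) hVpos.le
    _ = A / a * (dirichletForm K μ f / pairVariance μ f) := mul_div_mul_comm _ _ _ _

/-- Comparison of spectral gaps (Lemma 4.3, Diaconis–Saloff-Coste). -/
theorem spectral_gap_comparison
    {S : Type*} [Fintype S] [Nonempty S]
    (μ μ' : S → ℝ)
    (hμpos : ∀ σ, 0 < μ σ) (hμsum : ∑ σ, μ σ = 1)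
    (hμ'pos : ∀ σ, 0 < μ' σ) (hμ'sum : ∑ σ, μ' σ = 1)
    (K K' : S → S → ℝ)
    (hKnn : ∀ σ σ', 0 ≤ K σ σ') (hK'nn : ∀ σ σ', 0 ≤ K' σ σ')
    (hstatK : ∀ σ', ∑ σ, μ σ * K σ σ' = μ σ')
    (hstatK' : ∀ σ', ∑ σ, μ' σ * K' σ σ' = μ' σ')
    (E E' V V' : (S → ℝ) → ℝ)
    (hE : ∀ f, E f = (1 / 2) * ∑ σ, ∑ σ', |f σ - f σ'| ^ 2 * K σ σ' * μ σ)
    (hE' : ∀ f, E' f = (1 / 2) * ∑ σ, ∑ σ', |f σ - f σ'| ^ 2 * K' σ σ' * μ' σ)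
    (hV : ∀ f, V f = (1 / 2) * ∑ σ, ∑ σ', |f σ - f σ'| ^ 2 * μ σ * μ σ')
    (hV' : ∀ f, V' f = (1 / 2) * ∑ σ, ∑ σ', |f σ - f σ'| ^ 2 * μ' σ * μ' σ')
    (lam lam' : ℝ)
    (hlam : lam = sInf {r : ℝ | ∃ f : S → ℝ, V f ≠ 0 ∧ r = E f / V f})
    (hlam' : lam' = sInf {r : ℝ | ∃ f : S → ℝ, V' f ≠ 0 ∧ r = E' f / V' f})
    (A a : ℝ) (hA : 0 < A) (ha : 0 < a)
    (hEcomp : ∀ f : S → ℝ, E' f ≤ A * E f)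
    (hμcomp : ∀ σ, a * μ σ ≤ μ' σ) :
    lam' ≤ (A / a) * lam :=
  spectral_gap_comparison_general μ μ' hμpos hμsum hμ'pos hμ'sum K K' hK'nn E E' V V' hE hE' hV hV'
    lam lam' hlam hlam' A a hA ha hEcomp hμcomp
end
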